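/- Let A be a simple monotone well-founded ordered F-algebra and ≿ a precedence on F. Let (⊒∼, ⊐) be defined on non-variable terms by: s ⊒∼ t iff s >_A t, or (s ≥_A t and root(s) ≿ root(t)); s ⊐ t iff s >_A t, or (s ≥_A t and root(s) ≻ root(t)). Let >_spo be the semantic path order induced from (⊒∼, ⊐), and let >_mspo be defined by s >_mspo t iff s ≥_A t and s >_spo t. Then the three relations >_wpo, >_spo, and >_mspo coincide, where >_wpo is the weighted path order induced by A and ≿. -/
import Mathlib


/-- First-order terms over a signature `F` with arity function `ar` and variables `V`. -/
inductive Term (F : Type) (ar : F → ℕ) (V : Type) : Type where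
  | var : V → Term F ar V
  | app : (f : F) → (Fin (ar f) → Term F ar V) → Term F ar V

namespace Term

variable {F V : Type} {ar : F → ℕ}

/-- Application of a substitution `σ : V → Term F ar V` to a term. -/
def subst (σ : V → Term F ar V) : Term F ar V → Term F ar V
  | var v => σ v
  | app f args => app f (fun i => (args i).subst σ)

/-- Interpretation of a term in an `F`-algebra with carrier `A` under assignment `α`. -/
def eval {A : Type} (I : (f : F) → (Fin (ar f) → A) → A) (α : V → A) :
    Term F ar V → A
  | var v => α v
  | app f args => I f (fun i => (args i).eval I α)

/-- A term is a non-variable term (function application). -/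
def IsApp : Term F ar V → Prop
  | var _ => False
  | app _ _ => True

end Term

section Algebra

variable {F V A : Type}

/-- `RC lt a b` : reflexive closure of the strict order `lt`, i.e. `a ≤ b`. -/
def RC (lt : A → A → Prop) (a b : A) : Prop := lt a b ∨ a = b

variable (ar : F → ℕ) (I : (f : F) → (Fin (ar f) → A) → A) (lt : A → A → Prop)

/-- `s >_A t` : `[α](t) < [α](s)` for every assignment `α`. -/
def GTA (s t : Term F ar V) : Prop := ∀ α : V → A, lt (t.eval I α) (s.eval I α)

/-- `s ≥_A t` : `[α](t) ≤ [α](s)` for every assignment `α`. -/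
def GEA (s t : Term F ar V) : Prop := ∀ α : V → A, RC lt (t.eval I α) (s.eval I α)

/-- The algebra is simple: `f_A(a_1, …, a_n) ≥ a_i`. -/
def Simple : Prop := ∀ (f : F) (as : Fin (ar f) → A) (i : Fin (ar f)), RC lt (as i) (I f as)

/-- The algebra is weakly monotone: `a_i > b` implies
`f_A(a_1,…,a_i,…,a_n) ≥ f_A(a_1,…,b,…,a_n)`. -/
def WeaklyMonotone : Prop :=
  ∀ (f : F) (as : Fin (ar f) → A) (i : Fin (ar f)) (b : A),
    lt b (as i) → RC lt (I f (Function.update as i b)) (I f as)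

end Algebra

section WPO

variable {F V A : Type} (ar : F → ℕ) (I : (f : F) → (Fin (ar f) → A) → A)
  (lt : A → A → Prop) (prec : F → F → Prop)

mutual
  /-- The weighted path order induced by the algebra `(A, I, lt)` and the precedence `prec`. -/
  inductive WPO : Term F ar V → Term F ar V → Prop where
    /-- (1) `s >_A t`. -/
    | alg {s t} : GTA ar I lt s t → WPO s t
    /-- (2a) `s ≥_A t` and `s_i >_wpo t`. -/
    | sub {f ss t} (i : Fin (ar f)) :
        GEA ar I lt (Term.app f ss) t → WPO (ss i) t → WPO (Term.app f ss) t
    /-- (2a) `s ≥_A t` and `s_i = t`. -/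
    | subEq {f ss t} (i : Fin (ar f)) :
        GEA ar I lt (Term.app f ss) t → ss i = t → WPO (Term.app f ss) t
    /-- (2b-i) `s ≥_A t`, `s >_wpo t_j` for all `j`, and `f ≻ g`. -/
    | prc {f ss g ts} :
        GEA ar I lt (Term.app f ss) (Term.app g ts) →
        (∀ j, WPO (Term.app f ss) (ts j)) →
        prec f g → ¬ prec g f → WPO (Term.app f ss) (Term.app g ts)
    /-- (2b-ii) `s ≥_A t`, `s >_wpo t_j` for all `j`, `f ≿ g` and lex comparison of arguments. -/
    | lex {f ss g ts} :
        GEA ar I lt (Term.app f ss) (Term.app g ts) →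
        (∀ j, WPO (Term.app f ss) (ts j)) →
        prec f g → WPOLex (List.ofFn ss) (List.ofFn ts) →
        WPO (Term.app f ss) (Term.app g ts)

  /-- Lexicographic extension of `WPO` to argument lists (of possibly different lengths). -/
  inductive WPOLex : List (Term F ar V) → List (Term F ar V) → Prop where
    | head {s t l₁ l₂} : WPO s t → WPOLex (s :: l₁) (t :: l₂)
    | tail {s l₁ l₂} : WPOLex l₁ l₂ → WPOLex (s :: l₁) (s :: l₂)
    | longer {s l₁} : WPOLex (s :: l₁) []
end

end WPO

section SPO

variable {F V : Type} {ar : F → ℕ} (qge qgt : Term F ar V → Term F ar V → Prop)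

mutual
  /-- The semantic path order induced by the order pair `(qge, qgt)` (`⊒∼`, `⊐`). -/
  inductive SPO : Term F ar V → Term F ar V → Prop where
    /-- (1) `s_i >_spo t`. -/
    | sub {f ss t} (i : Fin (ar f)) : SPO (ss i) t → SPO (Term.app f ss) t
    /-- (1) `s_i = t`. -/
    | subEq {f ss t} (i : Fin (ar f)) : ss i = t → SPO (Term.app f ss) t
    /-- (2a) `s >_spo t_j` for all `j` and `s ⊐ t`. -/
    | gt {f ss g ts} : (∀ j, SPO (Term.app f ss) (ts j)) →
        qgt (Term.app f ss) (Term.app g ts) → SPO (Term.app f ss) (Term.app g ts)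
    /-- (2b) `s >_spo t_j` for all `j`, `s ⊒∼ t` and lex comparison of arguments. -/
    | lex {f ss g ts} : (∀ j, SPO (Term.app f ss) (ts j)) →
        qge (Term.app f ss) (Term.app g ts) →
        SPOLex (List.ofFn ss) (List.ofFn ts) → SPO (Term.app f ss) (Term.app g ts)

  /-- Lexicographic extension of `SPO` to argument lists. -/
  inductive SPOLex : List (Term F ar V) → List (Term F ar V) → Prop where
    | head {s t l₁ l₂} : SPO s t → SPOLex (s :: l₁) (t :: l₂)
    | tail {s l₁ l₂} : SPOLex l₁ l₂ → SPOLex (s :: l₁) (s :: l₂)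
    | longer {s l₁} : SPOLex (s :: l₁) []
end

end SPO

section Props

variable {F V : Type} {ar : F → ℕ}

/-- Closure under contexts: replacing one argument. -/
def ClosedCtx (R : Term F ar V → Term F ar V → Prop) : Prop :=
  ∀ (f : F) (args : Fin (ar f) → Term F ar V) (i : Fin (ar f)) (s t : Term F ar V),
    R s t → R (Term.app f (Function.update args i s)) (Term.app f (Function.update args i t))

/-- Closure under substitutions. -/
def ClosedSubst (R : Term F ar V → Term F ar V → Prop) : Prop :=
  ∀ (σ : V → Term F ar V) (s t : Term F ar V), R s t → R (s.subst σ) (t.subst σ)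

/-- A reduction order: a well-founded strict order closed under contexts and substitutions. -/
def ReductionOrder (R : Term F ar V → Term F ar V → Prop) : Prop :=
  (∀ s, ¬ R s s) ∧ Transitive R ∧ WellFounded (fun s t => R t s) ∧
    ClosedCtx R ∧ ClosedSubst R

/-- `Subterm t s` : `t` is a subterm of `s`. -/
inductive Subterm : Term F ar V → Term F ar V → Prop where
  | refl {t} : Subterm t t
  | arg {t f ss} (i : Fin (ar f)) : Subterm t (ss i) → Subterm t (Term.app f ss)

/-- `ProperSubterm t s` : `t` is a proper subterm of `s`. -/
def ProperSubterm (t s : Term F ar V) : Prop :=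
  ∃ (f : F) (ss : Fin (ar f) → Term F ar V) (i : Fin (ar f)),
    s = Term.app f ss ∧ Subterm t (ss i)

/-- The rewrite relation of a TRS `R`: closure of the rules under substitutions and contexts. -/
inductive Rewrite (R : Set (Term F ar V × Term F ar V)) : Term F ar V → Term F ar V → Prop where
  | rule {l r} (σ : V → Term F ar V) : (l, r) ∈ R → Rewrite R (l.subst σ) (r.subst σ)
  | ctx {s t} (f : F) (args : Fin (ar f) → Term F ar V) (i : Fin (ar f)) :
      Rewrite R s t →
      Rewrite R (Term.app f (Function.update args i s)) (Term.app f (Function.update args i t))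

end Props

section Pair

variable {F V A : Type} (ar : F → ℕ) (I : (f : F) → (Fin (ar f) → A) → A)
  (lt : A → A → Prop) (prec : F → F → Prop)

/-- `s ⊒∼ t` : both non-variable, and `s >_A t`, or `s ≥_A t` and `root(s) ≿ root(t)`. -/
def QGE (s t : Term F ar V) : Prop :=
  ∃ (f : F) (ss : Fin (ar f) → Term F ar V) (g : F) (ts : Fin (ar g) → Term F ar V),
    s = Term.app f ss ∧ t = Term.app g ts ∧
      (GTA ar I lt s t ∨ (GEA ar I lt s t ∧ prec f g))

/-- `s ⊐ t` : both non-variable, and `s >_A t`, or `s ≥_A t` and `root(s) ≻ root(t)`. -/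
def QGT (s t : Term F ar V) : Prop :=
  ∃ (f : F) (ss : Fin (ar f) → Term F ar V) (g : F) (ts : Fin (ar g) → Term F ar V),
    s = Term.app f ss ∧ t = Term.app g ts ∧
      (GTA ar I lt s t ∨ (GEA ar I lt s t ∧ prec f g ∧ ¬ prec g f))

variable (Im : (f : F) → (Fin (ar f) → A) → A)

/-- Interpretation of the marked term `t♯` (root symbol interpreted by `Im`). -/
def evalSharp (α : V → A) : Term F ar V → A
  | .var v => α v
  | .app f ts => Im f (fun i => (ts i).eval I α)

/-- `s♯ >_A t♯`. -/
def GTAS (s t : Term F ar V) : Prop :=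
  ∀ α : V → A, lt (evalSharp ar I Im α t) (evalSharp ar I Im α s)

/-- `s♯ ≥_A t♯`. -/
def GEAS (s t : Term F ar V) : Prop :=
  ∀ α : V → A, RC lt (evalSharp ar I Im α t) (evalSharp ar I Im α s)

/-- Marked version of `⊒∼` : `s♯ >_A t♯`, or `s♯ ≥_A t♯` and `root(s) ≿ root(t)`. -/
def QGES (s t : Term F ar V) : Prop :=
  ∃ (f : F) (ss : Fin (ar f) → Term F ar V) (g : F) (ts : Fin (ar g) → Term F ar V),
    s = Term.app f ss ∧ t = Term.app g ts ∧
      (GTAS ar I lt Im s t ∨ (GEAS ar I lt Im s t ∧ prec f g))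

/-- Marked version of `⊐` : `s♯ >_A t♯`, or `s♯ ≥_A t♯` and `root(s) ≻ root(t)`. -/
def QGTS (s t : Term F ar V) : Prop :=
  ∃ (f : F) (ss : Fin (ar f) → Term F ar V) (g : F) (ts : Fin (ar g) → Term F ar V),
    s = Term.app f ss ∧ t = Term.app g ts ∧
      (GTAS ar I lt Im s t ∨ (GEAS ar I lt Im s t ∧ prec f g ∧ ¬ prec g f))

/-- The generalized weighted path order: `s ≥_A t` and `s >_spo t` for the SPO induced
from the marked order pair. -/
def GWPO (s t : Term F ar V) : Prop :=
  GEA ar I lt s t ∧ SPO (QGES ar I lt prec Im) (QGTS ar I lt prec Im) s t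

end Pair

section Proof

variable {F V A : Type} {ar : F → ℕ} {I : (f : F) → (Fin (ar f) → A) → A}
  {lt : A → A → Prop} {prec : F → F → Prop}


private lemma rc_trans (lt_trans : Transitive lt) {a b c : A} (h1 : RC lt a b) (h2 : RC lt b c) : RC lt a c := by
  rcases h1 with h1 | rfl
  · rcases h2 with h2 | rfl
    · exact Or.inl (lt_trans h1 h2)
    · exact Or.inl h1
  · exact h2

private lemma rc_lt_trans (lt_trans : Transitive lt) {a b c : A} (h1 : RC lt a b) (h2 : lt b c) : lt a c := by
  rcases h1 with h1 | rfl
  · exact lt_trans h1 h2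
  · exact h2

private lemma gea_arg (hsimple : Simple ar I lt) (f : F) (ss : Fin (ar f) → Term F ar V) (i : Fin (ar f)) :
    GEA ar I lt (Term.app f ss) (ss i) :=
  fun α => hsimple f (fun j => (ss j).eval I α) i

private lemma gea_trans (lt_trans : Transitive lt) {s u t : Term F ar V} (h1 : GEA ar I lt s u) (h2 : GEA ar I lt u t) :
    GEA ar I lt s t := fun α => rc_trans lt_trans (h2 α) (h1 α)

private lemma gta_gea {s t : Term F ar V} (h : GTA ar I lt s t) : GEA ar I lt s t :=
  fun α => Or.inl (h α)

private lemma occ_le (lt_trans : Transitive lt) (hsimple : Simple ar I lt) {v : V} {t : Term F ar V} (h : Subterm (Term.var v) t) (α : V → A) :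
    RC lt (α v) (t.eval I α) := by
  induction h with
  | refl => exact Or.inr rfl
  | @arg f ss i h ih =>
    exact rc_trans lt_trans ih (hsimple f (fun j => (ss j).eval I α) i)

private lemma notocc_eval [DecidableEq V] {v : V} {t : Term F ar V}
    (h : ¬ Subterm (Term.var v) t) (α : V → A) (a : A) :
    t.eval I (Function.update α v a) = t.eval I α := by
  induction t with
  | var w =>
    by_cases hw : w = v
    · subst hw; exact absurd Subterm.refl h
    · simp [Term.eval, Function.update, hw]
  | app f ts ih =>
    simp only [Term.eval]
    congr 1
    funext i
    exact ih i (fun hc => h (Subterm.arg i hc))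

variable [Nonempty A]

private lemma gta_not_var (lt_irrefl : ∀ a, ¬ lt a a) (lt_trans : Transitive lt)
    (hsimple : Simple ar I lt) (v : V) (t : Term F ar V) :
    ¬ GTA ar I lt (Term.var v) t := by
  intro h
  haveI := Classical.decEq V
  obtain ⟨a0⟩ := ‹Nonempty A›
  by_cases hocc : Subterm (Term.var v) t
  · have h1 := occ_le lt_trans hsimple hocc (fun _ => a0)
    have h2 := h (fun _ => a0)
    rcases h1 with h1 | h1
    · exact lt_irrefl _ (lt_trans h2 h1)
    · rw [Term.eval, ← h1] at h2; exact lt_irrefl _ h2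
  · have h2 := h (Function.update (fun _ => a0) v (t.eval I (fun _ => a0)))
    rw [notocc_eval hocc (fun _ => a0) (t.eval I (fun _ => a0))] at h2
    simp only [Term.eval, Function.update_self] at h2
    exact lt_irrefl _ h2

private lemma gta_not_var' (lt_irrefl : ∀ a, ¬ lt a a) (lt_trans : Transitive lt) (hsimple : Simple ar I lt) {v : V} {t : Term F ar V} {s : Term F ar V} (hs : s = Term.var v)
    (h : GTA ar I lt s t) : False := by
  subst hs; exact gta_not_var lt_irrefl lt_trans hsimple v t h

private lemma subterm_spo {qge qgt : Term F ar V → Term F ar V → Prop} {u s : Term F ar V}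
    (h : Subterm u s) : u = s ∨ SPO qge qgt s u := by
  induction h with
  | refl => exact Or.inl rfl
  | arg i h ih =>
    rcases ih with rfl | ih
    · exact Or.inr (SPO.subEq i rfl)
    · exact Or.inr (SPO.sub i ih)

private lemma gta_spo (lt_irrefl : ∀ a, ¬ lt a a) (lt_trans : Transitive lt)
    (hsimple : Simple ar I lt) :
    ∀ (t s : Term F ar V), GTA ar I lt s t →
      SPO (QGE ar I lt prec) (QGT ar I lt prec) s t := by
  intro t
  haveI := Classical.decEq V
  obtain ⟨a0⟩ := ‹Nonempty A›
  induction t with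
  | var v =>
    intro s h
    cases s with
    | var w => exact absurd h (gta_not_var lt_irrefl lt_trans hsimple w _)
    | app f ss =>
      by_cases hocc : Subterm (Term.var v) (Term.app f ss)
      · rcases subterm_spo hocc with heq | hspo
        · exact absurd heq (by simp)
        · exact hspo
      · exfalso
        have h2 := h (Function.update (fun _ => a0) v
          ((Term.app f ss).eval I (fun _ => a0)))
        rw [notocc_eval hocc (fun _ => a0) _] at h2
        simp only [Term.eval, Function.update_self] at h2
        exact lt_irrefl _ h2
  | app g ts ih =>
    intro s h
    cases s with
    | var w => exact absurd h (gta_not_var lt_irrefl lt_trans hsimple w _)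
    | app f ss =>
      refine SPO.gt (fun j => ih j _ (fun α =>
          rc_lt_trans lt_trans (hsimple g (fun k => (ts k).eval I α) j) (h α)))
        ⟨f, ss, g, ts, rfl, rfl, Or.inl h⟩

private lemma spo_gea (lt_trans : Transitive lt) (hsimple : Simple ar I lt) :
    ∀ {s t : Term F ar V}, SPO (QGE ar I lt prec) (QGT ar I lt prec) s t →
      GEA ar I lt s t := by
  intro s t h
  refine SPO.rec (motive_1 := fun s t _ => GEA ar I lt s t)
    (motive_2 := fun _ _ _ => True) ?_ ?_ ?_ ?_ ?_ ?_ ?_ h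
  · intro f ss t i _ ih
    exact gea_trans lt_trans (gea_arg hsimple f ss i) ih
  · intro f ss t i heq
    subst heq; exact gea_arg hsimple f ss i
  · rintro f ss g ts _ ⟨f', ss', g', ts', hs, ht, hor⟩ _
    rcases hor with hgt | ⟨hge, _⟩
    · exact gta_gea hgt
    · exact hge
  · rintro f ss g ts _ ⟨f', ss', g', ts', hs, ht, hor⟩ _ _ _
    rcases hor with hgt | ⟨hge, _⟩
    · exact gta_gea hgt
    · exact hge
  all_goals intros; trivial

private lemma spo_to_wpo (lt_trans : Transitive lt) (hsimple : Simple ar I lt) :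
    ∀ {s t : Term F ar V}, SPO (QGE ar I lt prec) (QGT ar I lt prec) s t →
      WPO ar I lt prec s t := by
  intro s t h
  refine SPO.rec (motive_1 := fun s t _ => WPO ar I lt prec s t)
    (motive_2 := fun l1 l2 _ => WPOLex ar I lt prec l1 l2) ?_ ?_ ?_ ?_ ?_ ?_ ?_ h
  · intro f ss t i hspo ih
    exact WPO.sub i (gea_trans lt_trans (gea_arg hsimple f ss i)
      (spo_gea lt_trans hsimple hspo)) ih
  · intro f ss t i heq
    exact WPO.subEq i (heq ▸ gea_arg hsimple f ss i) heq
  · rintro f ss g ts _ ⟨f', ss', g', ts', hs, ht, hor⟩ ihs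
    injection hs with hf hss
    injection ht with hg hts
    subst hf; subst hg
    rcases hor with hgt | ⟨hge, hp, hnp⟩
    · exact WPO.alg hgt
    · exact WPO.prc hge ihs hp hnp
  · rintro f ss g ts _ ⟨f', ss', g', ts', hs, ht, hor⟩ hlex ihs ihlex
    injection hs with hf hss
    injection ht with hg hts
    subst hf; subst hg
    rcases hor with hgt | ⟨hge, hp⟩
    · exact WPO.alg hgt
    · exact WPO.lex hge ihs hp ihlex
  · intro s t l1 l2 _ ih
    exact WPOLex.head ih
  · intro s l1 l2 _ ih
    exact WPOLex.tail ih
  · intro s l1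
    exact WPOLex.longer

private lemma wpo_to_spo (lt_irrefl : ∀ a, ¬ lt a a) (lt_trans : Transitive lt) (hsimple : Simple ar I lt) [Nonempty A] :
    ∀ {s t : Term F ar V}, WPO ar I lt prec s t →
      SPO (QGE ar I lt prec) (QGT ar I lt prec) s t := by
  intro s t h
  refine WPO.rec (motive_1 := fun s t _ => SPO (QGE ar I lt prec) (QGT ar I lt prec) s t)
    (motive_2 := fun l1 l2 _ => SPOLex (QGE ar I lt prec) (QGT ar I lt prec) l1 l2)
    ?_ ?_ ?_ ?_ ?_ ?_ ?_ ?_ h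
  · intro s t hgt
    exact gta_spo lt_irrefl lt_trans hsimple t s hgt
  · intro f ss t i _ _ ih
    exact SPO.sub i ih
  · intro f ss t i _ heq
    exact SPO.subEq i heq
  · intro f ss g ts hge _ hp hnp ihs
    exact SPO.gt ihs ⟨f, ss, g, ts, rfl, rfl, Or.inr ⟨hge, hp, hnp⟩⟩
  · intro f ss g ts hge _ hp _ ihs ihlex
    exact SPO.lex ihs ⟨f, ss, g, ts, rfl, rfl, Or.inr ⟨hge, hp⟩⟩ ihlex
  · intro s t l1 l2 _ ih
    exact SPOLex.head ih
  · intro s l1 l2 _ ih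
    exact SPOLex.tail ih
  · intro s l1
    exact SPOLex.longer

end Proof

/-- For a simple monotone well-founded ordered `F`-algebra and a
precedence, the weighted path order, the semantic path order induced from `(⊒∼, ⊐)`
(here `QGE`, `QGT`), and the monotonic semantic path order (`s ≥_A t ∧ s >_spo t`)
all coincide. -/
theorem wpo_spo_mspo_coincide
    {F V A : Type} [Fintype F] [Countable V] [Infinite V] [Nonempty A]
    (ar : F → ℕ) (I : (f : F) → (Fin (ar f) → A) → A) (lt : A → A → Prop)
    (lt_irrefl : ∀ a, ¬ lt a a) (lt_trans : Transitive lt)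
    (lt_wf : WellFounded lt)
    (hsimple : Simple ar I lt) (hmono : WeaklyMonotone ar I lt)
    (prec : F → F → Prop) (prec_refl : ∀ f, prec f f)
    (prec_trans : ∀ f g h, prec f g → prec g h → prec f h) :
    ∀ s t : Term F ar V,
      (WPO ar I lt prec s t ↔ SPO (QGE ar I lt prec) (QGT ar I lt prec) s t) ∧
      (WPO ar I lt prec s t ↔
        (GEA ar I lt s t ∧ SPO (QGE ar I lt prec) (QGT ar I lt prec) s t)) := by
  intro s t
  constructor
  · exact ⟨fun h => wpo_to_spo lt_irrefl lt_trans hsimple h,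
      fun h => spo_to_wpo lt_trans hsimple h⟩
  · exact ⟨fun h => ⟨spo_gea lt_trans hsimple (wpo_to_spo lt_irrefl lt_trans hsimple h),
      wpo_to_spo lt_irrefl lt_trans hsimple h⟩,
      fun h => spo_to_wpo lt_trans hsimple h.2⟩
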